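/- With notation as above, for g ∈ ℚ[x_1,...,x_n]: det g(M_{x_1},...,M_{x_n}) = 0 if and only if there exists (ε_1,...,ε_n) ∈ {0,1}^n with g(ε_1,...,ε_n) = 0. Equivalently, the quantifier-free condition det g(M_{x_1},...,M_{x_n}) = 0 is equivalent to ∃x_1...∃x_n (⋀_{i=1}^n x_i² − x_i = 0 ∧ g(x_1,...,x_n) = 0) over ℚ (or ℂ). -/

import Mathlib

open MvPolynomial

set_option synthInstance.maxHeartbeats 1000000
set_option maxHeartbeats 1000000

/-- The ideal `(x₁²−x₁, …, xₙ²−xₙ)` of `ℚ[x₁,…,xₙ]`. -/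
noncomputable def boolIdeal (n : ℕ) : Ideal (MvPolynomial (Fin n) ℚ) :=
  Ideal.span (Set.range fun i : Fin n => X i ^ 2 - X i)

/-- The quotient algebra `A = ℚ[x₁,…,xₙ]/(x₁²−x₁,…,xₙ²−xₙ)`. -/
abbrev BoolQuot (n : ℕ) : Type := MvPolynomial (Fin n) ℚ ⧸ boolIdeal n

/-- Substitution of the (pairwise commuting) matrices `M i` for the
variables `xᵢ` in a polynomial `g`: `g(M₁,…,Mₙ)`. -/
noncomputable def matSubst {n : ℕ} {N : Type*} [Fintype N] [DecidableEq N]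
    (M : Fin n → Matrix N N ℚ) (g : MvPolynomial (Fin n) ℚ) : Matrix N N ℚ :=
  ∑ d ∈ g.support,
    g.coeff d • ((List.finRange n).map fun i => M i ^ d i).prod

/-!
Evaluation at the `2ⁿ` points of `{0,1}ⁿ` induces an algebra isomorphism `A ≅ ℚ^{0,1}ⁿ`: it is
surjective because the indicator `∏ᵢ (xᵢ or 1 - xᵢ)` of each point lies in its image, and `A` has
dimension `2ⁿ`. The matrix `g(M₁,…,Mₙ)` represents multiplication by `g` on `A`, so its determinant
is the norm of `g` in `A`, which under the isomorphism becomes the norm of a diagonal multiplication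
operator on `ℚ^{0,1}ⁿ`, namely `∏_{ε ∈ {0,1}ⁿ} g(ε)`.
-/

theorem matSubst_eq_of_algHom {n : ℕ} {N : Type*} [Fintype N] [DecidableEq N]
    (Φ : MvPolynomial (Fin n) ℚ →ₐ[ℚ] Matrix N N ℚ) {M : Fin n → Matrix N N ℚ}
    (hΦ : ∀ i, Φ (X i) = M i) (g : MvPolynomial (Fin n) ℚ) : matSubst M g = Φ g := by
  have hmonomial : ∀ d : Fin n →₀ ℕ,
      Φ (monomial d 1) = ((List.finRange n).map fun i => M i ^ d i).prod := by
    intro d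
    rw [monomial_eq, C_1, one_mul, Finsupp.prod_fintype _ _ (fun _ => pow_zero _),
      Fin.prod_univ_def, map_list_prod, List.map_map]
    simp [Function.comp_def, hΦ]
  conv_rhs => rw [g.as_sum]
  simp only [matSubst, map_sum, ← hmonomial, ← map_smul, smul_eq_mul, mul_one]

theorem Algebra.norm_pi {R ι : Type*} [CommRing R] [Fintype ι] [DecidableEq ι] (h : ι → R) :
    Algebra.norm R h = ∏ i, h i := by
  have : Algebra.leftMulMatrix (Pi.basisFun R ι) h = Matrix.diagonal h := by
    ext i j
    simp [Algebra.leftMulMatrix_eq_repr_mul, Matrix.diagonal_apply, Pi.single_apply]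
  rw [Algebra.norm_eq_matrix_det (Pi.basisFun R ι), this, Matrix.det_diagonal]

theorem sq_sub_self_eq_zero_iff {K : Type*} [Ring K] [NoZeroDivisors K] {x : K} :
    x ^ 2 - x = 0 ↔ x = 0 ∨ x = 1 := by
  rw [sub_eq_zero, sq, ← IsIdempotentElem, IsIdempotentElem.iff_eq_zero_or_one]

def boolPoint {n : ℕ} (ε : Fin n → Bool) : Fin n → ℚ := fun i => if ε i then 1 else 0

theorem exists_boolPoint_iff {n : ℕ} {P : (Fin n → ℚ) → Prop} :
    (∃ ε, P (boolPoint ε)) ↔ ∃ x : Fin n → ℚ, (∀ i, x i ^ 2 - x i = 0) ∧ P x := by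
  constructor
  · rintro ⟨ε, hε⟩
    exact ⟨boolPoint ε, fun i => by by_cases h : ε i <;> simp [boolPoint, h], hε⟩
  · rintro ⟨x, hx, hPx⟩
    refine ⟨fun i => decide (x i = 1), ?_⟩
    convert hPx using 1
    funext i
    rcases sq_sub_self_eq_zero_iff.mp (hx i) with h | h <;> simp [boolPoint, h]

noncomputable def boolEval (n : ℕ) : MvPolynomial (Fin n) ℚ →ₐ[ℚ] ((Fin n → Bool) → ℚ) :=
  AlgHom.pi fun ε => aeval (boolPoint ε)

theorem boolEval_apply {n : ℕ} (g : MvPolynomial (Fin n) ℚ) (ε : Fin n → Bool) :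
    boolEval n g ε = eval (boolPoint ε) g := by
  simp [boolEval, aeval_eq_eval]

theorem boolIdeal_le_ker_boolEval (n : ℕ) : boolIdeal n ≤ RingHom.ker (boolEval n) := by
  rw [boolIdeal, Ideal.span_le]
  rintro _ ⟨i, rfl⟩
  funext ε
  by_cases h : ε i <;> simp [boolEval_apply, boolPoint, h]

noncomputable def boolIndicator {n : ℕ} (ε : Fin n → Bool) : MvPolynomial (Fin n) ℚ :=
  ∏ i, if ε i then X i else 1 - X i

theorem boolEval_boolIndicator {n : ℕ} (ε : Fin n → Bool) :
    boolEval n (boolIndicator ε) = Pi.single ε 1 := by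
  funext ε'
  have hfactor : ∀ i, eval (boolPoint ε') (if ε i then X i else 1 - X i) =
      if ε' i = ε i then 1 else 0 := by
    intro i
    cases ε i <;> cases h : ε' i <;> simp [boolPoint, h]
  simp only [boolEval_apply, boolIndicator, map_prod, hfactor, Fintype.prod_boole,
    Pi.single_apply, _root_.funext_iff]
  congr

theorem boolEval_surjective (n : ℕ) : Function.Surjective (boolEval n) := by
  intro h
  refine ⟨∑ ε, h ε • boolIndicator ε, ?_⟩
  simpa [boolEval_boolIndicator] using (Pi.basisFun ℚ _).sum_repr h

noncomputable def boolQuotEval (n : ℕ) : BoolQuot n →ₐ[ℚ] ((Fin n → Bool) → ℚ) :=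
  Ideal.Quotient.liftₐ (boolIdeal n) (boolEval n) fun _ ha => boolIdeal_le_ker_boolEval n ha

theorem boolQuotEval_mk {n : ℕ} (g : MvPolynomial (Fin n) ℚ) :
    boolQuotEval n (Ideal.Quotient.mk (boolIdeal n) g) = boolEval n g :=
  Ideal.Quotient.liftₐ_apply _ _ _ _

-- Injectivity is free: a surjection between spaces of the same dimension `2ⁿ`.
theorem boolQuotEval_bijective {n : ℕ} (b : Module.Basis (Fin n → Bool) ℚ (BoolQuot n)) :
    Function.Bijective (boolQuotEval n) := by
  have : Module.Finite ℚ (BoolQuot n) := Module.Finite.of_basis b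
  have hsurj : Function.Surjective (boolQuotEval n) :=
    Ideal.Quotient.lift_surjective_of_surjective _ _ (boolEval_surjective n)
  have hdim : Module.finrank ℚ (BoolQuot n) = Module.finrank ℚ ((Fin n → Bool) → ℚ) := by
    rw [Module.finrank_eq_card_basis b, Module.finrank_pi]
  exact ⟨(LinearMap.injective_iff_surjective_of_finrank_eq_finrank
    (f := (boolQuotEval n).toLinearMap) hdim).mpr hsurj, hsurj⟩

theorem det_matSubst {n : ℕ} (b : Module.Basis (Fin n → Bool) ℚ (BoolQuot n))
    (M : Fin n → Matrix (Fin n → Bool) (Fin n → Bool) ℚ)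
    (hM : ∀ i, M i = LinearMap.toMatrix b b
      (LinearMap.mulLeft ℚ (Ideal.Quotient.mk (boolIdeal n) (X i))))
    (g : MvPolynomial (Fin n) ℚ) :
    (matSubst M g).det = ∏ ε, eval (boolPoint ε) g := by
  let e := AlgEquiv.ofBijective _ (boolQuotEval_bijective b)
  have hsubst : matSubst M g = Algebra.leftMulMatrix b (Ideal.Quotient.mk (boolIdeal n) g) :=
    matSubst_eq_of_algHom ((Algebra.leftMulMatrix b).comp (Ideal.Quotient.mkₐ ℚ _))
      (fun i => (hM i).symm) g
  calc (matSubst M g).det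
      = Algebra.norm ℚ (Ideal.Quotient.mk (boolIdeal n) g) := by
        rw [hsubst, Algebra.norm_eq_matrix_det b]
    _ = Algebra.norm ℚ (e (Ideal.Quotient.mk (boolIdeal n) g)) :=
        (Algebra.norm_eq_of_algEquiv e _).symm
    _ = ∏ ε, eval (boolPoint ε) g := by
        simp [e, Algebra.norm_pi, boolQuotEval_mk, boolEval_apply]

theorem stmt_6_general (n : ℕ)
    (b : Module.Basis (Fin n → Bool) ℚ (BoolQuot n))
    (M : Fin n → Matrix (Fin n → Bool) (Fin n → Bool) ℚ)
    (hM : ∀ i, M i = LinearMap.toMatrix b b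
      (LinearMap.mulLeft ℚ (Ideal.Quotient.mk (boolIdeal n) (X i))))
    (g : MvPolynomial (Fin n) ℚ) :
    ((matSubst M g).det = 0
      ↔ ∃ ε : Fin n → Bool, eval (fun i => if ε i then (1 : ℚ) else 0) g = 0) ∧
    ((matSubst M g).det = 0
      ↔ ∃ x : Fin n → ℚ, (∀ i, x i ^ 2 - x i = 0) ∧ eval x g = 0) := by
  have hdet_eq_zero : (matSubst M g).det = 0 ↔ ∃ ε, eval (boolPoint ε) g = 0 := by
    simp [det_matSubst b M hM, Finset.prod_eq_zero_iff]
  exact ⟨hdet_eq_zero, hdet_eq_zero.trans (exists_boolPoint_iff (P := fun x => eval x g = 0))⟩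

/-- with the multiplication matrices `M i` of the classes of
the `xᵢ` w.r.t. the monomial basis of `A = ℚ[x]/(x₁²−x₁,…,xₙ²−xₙ)`, for
any `g ∈ ℚ[x₁,…,xₙ]`: `det g(M₁,…,Mₙ) = 0` iff `g` vanishes at some point
of `{0,1}ⁿ`, iff `∃ x₁…xₙ (⋀ᵢ xᵢ²−xᵢ = 0 ∧ g(x) = 0)` holds. -/
theorem stmt_6 (n : ℕ)
    (b : Module.Basis (Fin n → Bool) ℚ (BoolQuot n))
    (hb : ∀ δ : Fin n → Bool,
      b δ = Ideal.Quotient.mk (boolIdeal n) (∏ i, if δ i then X i else 1))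
    (M : Fin n → Matrix (Fin n → Bool) (Fin n → Bool) ℚ)
    (hM : ∀ i, M i = LinearMap.toMatrix b b
      (LinearMap.mulLeft ℚ (Ideal.Quotient.mk (boolIdeal n) (X i))))
    (g : MvPolynomial (Fin n) ℚ) :
    ((matSubst M g).det = 0
      ↔ ∃ ε : Fin n → Bool, eval (fun i => if ε i then (1 : ℚ) else 0) g = 0) ∧
    ((matSubst M g).det = 0
      ↔ ∃ x : Fin n → ℚ, (∀ i, x i ^ 2 - x i = 0) ∧ eval x g = 0) :=
  stmt_6_general n b M hM g
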